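/- Let $c_1, \ldots, c_\nu \in \mathbb{Q}^*_{>0}$ be multiplicatively independent. Then the following are equivalent: (a) whenever $c \in \langle c_1, \ldots, c_\nu \rangle$ one has $\widehat{c} \in \langle \widehat{c_1}, \ldots, \widehat{c_\nu} \rangle$; (b) the torsion subgroup of $\mathbb{Q}^*/\langle -1, c_1, \ldots, c_\nu \rangle$ is isomorphic to $\mathbb{Z}/m_{c_1} \oplus \cdots \oplus \mathbb{Z}/m_{c_\nu}$, generated by the classes of $\widehat{c_1}, \ldots, \widehat{c_\nu}$. -/

import Mathlib

/-
The exponents `m` for which `x` has a positive rational `m`-th root are exactly the divisors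
of `m_x`, because roots of orders `n` and `m` combine into one of order `lcm n m`.

Put `H = ⟨-1, c_1, …, c_ν⟩`, `b_i = ĉ_i` and `m_i = m_{c_i}`. As `b_i ^ m_i = c_i`, the `b_i`
are independent, and since the positive elements of `H` are those of `⟨c_1, …, c_ν⟩`, a product
`∏ b_i ^ z_i` lies in `H` only when every `m_i` divides `z_i`. So `k ↦ [∏ b_i ^ k_i]` is an
injective homomorphism `ψ` from `⊕ ℤ/m_i` to the torsion of `ℚ*/H`, sending the generators to
the classes of the `b_i`. Condition (a) says exactly that `ψ` is onto: a torsion class has a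
positive representative `w`, some power `w ^ n = c` lies in `⟨c_1, …, c_ν⟩`, and `w` is a power
of `ĉ`; conversely `ĉ` is torsion modulo `H`. Finally, if the torsion group is isomorphic to
`⊕ ℤ/m_i` at all, it is finite of the same order, so the injective `ψ` is onto.
-/

open scoped Classical

/-- `mRoot x` is the largest `m` such that `x` has a positive rational `m`-th root. -/
noncomputable def mRoot (x : ℚ) : ℕ :=
  sSup {m : ℕ | ∃ y : ℚ, 0 < y ∧ y ^ m = x}

/-- `hatRootU x` is a positive rational unit with `(hatRootU x) ^ (mRoot x) = x`
(when one exists). -/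
noncomputable def hatRootU (x : ℚˣ) : ℚˣ :=
  if h : ∃ y : ℚˣ, 0 < (y : ℚ) ∧ y ^ mRoot (x : ℚ) = x then h.choose else 1

theorem exists_pos_pow_lcm_eq {K : Type*} [Field K] [LinearOrder K] [IsStrictOrderedRing K]
    {x y z : K} {n m : ℕ} (hy : 0 < y) (hz : 0 < z) (hyx : y ^ n = x) (hzx : z ^ m = x) :
    ∃ w, 0 < w ∧ w ^ n.lcm m = x := by
  rcases Nat.eq_zero_or_pos (n.gcd m) with hg | hg
  · rw [Nat.gcd_eq_zero_iff] at hg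
    exact ⟨1, one_pos, by simp [hg.1, ← hyx]⟩
  obtain ⟨g, n', m', -, hcop, rfl, rfl⟩ := Nat.exists_coprime' hg
  obtain ⟨u, v, huv⟩ := Nat.isCoprime_iff_coprime.2 hcop
  have hx : x ≠ 0 := hyx ▸ (pow_pos hy _).ne'
  -- Bezout: `u n' + v m' = 1` makes `y ^ v * z ^ u` an `lcm`-th root of `x`.
  refine ⟨y ^ v * z ^ u, by positivity, ?_⟩
  calc (y ^ v * z ^ u) ^ (n' * g).lcm (m' * g)
      = (y ^ (n' * g)) ^ (v * m') * (z ^ (m' * g)) ^ (u * n') := by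
        rw [mul_comm n', mul_comm m', Nat.lcm_mul_left, hcop.lcm_eq_mul, ← zpow_natCast,
          ← zpow_natCast y, ← zpow_natCast z, mul_zpow, ← zpow_mul, ← zpow_mul, ← zpow_mul,
          ← zpow_mul]
        push_cast; ring_nf
    _ = x := by rw [hyx, hzx, ← zpow_add₀ hx, add_comm, huv, zpow_one]

theorem bddAbove_setOf_pos_pow_eq {x : ℚ} (hx : x ≠ 1) :
    BddAbove {m : ℕ | ∃ y : ℚ, 0 < y ∧ y ^ m = x} := by
  refine ⟨x.num.natAbs + x.den, fun m ⟨y, hy, hyx⟩ => ?_⟩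
  have hnum : y.num.natAbs ^ m = x.num.natAbs := by rw [← Int.natAbs_pow, ← Rat.num_pow, hyx]
  have hden : y.den ^ m = x.den := by rw [← Rat.den_pow, hyx]
  -- `y ≠ 1` has numerator or denominator at least `2`, and `m < 2 ^ m`.
  have h2 : 2 ≤ max y.num.natAbs y.den := by
    have := Rat.num_pos.2 hy
    by_contra! h
    have hy1 : y = 1 := Rat.ext (by simp; omega) (by simp; have := y.den_pos; omega)
    exact hx (by rw [← hyx, hy1, one_pow])
  refine le_of_lt <| calc m < 2 ^ m := Nat.lt_two_pow_self
    _ ≤ max y.num.natAbs y.den ^ m := Nat.pow_le_pow_left h2 m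
    _ ≤ x.num.natAbs + x.den := by
      rw [← hnum, ← hden]; rcases max_choice y.num.natAbs y.den with h | h <;> rw [h] <;> omega

theorem mRoot_mem {x : ℚ} (hx : 0 < x) (hx1 : x ≠ 1) :
    mRoot x ∈ {m : ℕ | ∃ y : ℚ, 0 < y ∧ y ^ m = x} :=
  Nat.sSup_mem ⟨1, x, hx, pow_one x⟩ (bddAbove_setOf_pos_pow_eq hx1)

theorem mRoot_pos {x : ℚ} (hx : 0 < x) (hx1 : x ≠ 1) : 0 < mRoot x :=
  le_csSup (bddAbove_setOf_pos_pow_eq hx1) ⟨x, hx, pow_one x⟩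

theorem dvd_mRoot {x y : ℚ} {n : ℕ} (hx1 : x ≠ 1) (hy : 0 < y) (hyx : y ^ n = x) :
    n ∣ mRoot x := by
  have hx : 0 < x := hyx ▸ pow_pos hy n
  have hn : n ≠ 0 := by rintro rfl; exact hx1 (by simpa using hyx.symm)
  obtain ⟨z, hz, hzx⟩ := mRoot_mem hx hx1
  obtain ⟨w, hw, hwx⟩ := exists_pos_pow_lcm_eq hy hz hyx hzx
  have hle : n.lcm (mRoot x) ≤ mRoot x := le_csSup (bddAbove_setOf_pos_pow_eq hx1) ⟨w, hw, hwx⟩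
  have hlcm : n.lcm (mRoot x) = mRoot x := le_antisymm hle <|
    Nat.le_of_dvd (Nat.lcm_pos (Nat.pos_of_ne_zero hn) (mRoot_pos hx hx1)) (Nat.dvd_lcm_right _ _)
  exact hlcm ▸ Nat.dvd_lcm_left _ _

theorem exists_unit_pos_pow_mRoot_eq {x : ℚˣ} (hx : 0 < (x : ℚ)) (hx1 : x ≠ 1) :
    ∃ y : ℚˣ, 0 < (y : ℚ) ∧ y ^ mRoot (x : ℚ) = x := by
  obtain ⟨y, hy, hyx⟩ := mRoot_mem hx (Units.val_eq_one.not.2 hx1)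
  exact ⟨Units.mk0 y hy.ne', hy, Units.ext (by simpa using hyx)⟩

theorem hatRootU_pos {x : ℚˣ} (hx : 0 < (x : ℚ)) (hx1 : x ≠ 1) : 0 < (hatRootU x : ℚ) := by
  rw [hatRootU, dif_pos (exists_unit_pos_pow_mRoot_eq hx hx1)]
  exact (exists_unit_pos_pow_mRoot_eq hx hx1).choose_spec.1

theorem hatRootU_pow_mRoot {x : ℚˣ} (hx : 0 < (x : ℚ)) (hx1 : x ≠ 1) :
    hatRootU x ^ mRoot (x : ℚ) = x := by
  rw [hatRootU, dif_pos (exists_unit_pos_pow_mRoot_eq hx hx1)]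
  exact (exists_unit_pos_pow_mRoot_eq hx hx1).choose_spec.2

theorem eq_hatRootU_pow {x y : ℚˣ} {n : ℕ} (hx1 : x ≠ 1) (hy : 0 < (y : ℚ)) (hyx : y ^ n = x) :
    y = hatRootU x ^ (mRoot (x : ℚ) / n) := by
  have hyx' : (y : ℚ) ^ n = x := by rw [← Units.val_pow_eq_pow_val, hyx]
  have hx : 0 < (x : ℚ) := hyx' ▸ pow_pos hy n
  have hdvd := dvd_mRoot (Units.val_eq_one.not.2 hx1) hy hyx'
  have hn : n ≠ 0 := by rintro rfl; exact hx1 (by simpa using hyx.symm)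
  refine Units.ext ((pow_left_inj₀ hy.le (by simp [(hatRootU_pos hx hx1).le]) hn).1 ?_)
  rw [hyx', Units.val_pow_eq_pow_val, ← pow_mul, Nat.div_mul_cancel hdvd,
    ← Units.val_pow_eq_pow_val, hatRootU_pow_mRoot hx hx1]

def MulIndependent {G ι : Type*} [CommGroup G] [Fintype ι] (c : ι → G) : Prop :=
  ∀ l : ι → ℤ, ∏ i, c i ^ l i = 1 → l = 0

namespace MulIndependent

variable {G ι : Type*} [CommGroup G] [Fintype ι] {a c : ι → G} {m : ι → ℕ}

theorem ne_one (hc : MulIndependent c) (i : ι) : c i ≠ 1 := by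
  intro h
  have := congrFun (hc (Pi.single i 1) (by simp [Pi.single_apply, h])) i
  simp at this

theorem of_pow_eq (hc : MulIndependent c) (hm : ∀ i, m i ≠ 0) (hac : ∀ i, a i ^ m i = c i) :
    MulIndependent a := by
  intro k hk
  -- Raising to `M = ∏ m i` turns `a i ^ k i` into a power of `c i`.
  have hM (i : ι) : m i * ∏ j ∈ Finset.univ.erase i, m j = ∏ j, m j :=
    Finset.mul_prod_erase _ _ (Finset.mem_univ i)
  have hcoef := hc (fun i => k i * ∏ j ∈ Finset.univ.erase i, m j) <| by
    calc ∏ i, c i ^ (k i * ∏ j ∈ Finset.univ.erase i, m j)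
        = (∏ i, a i ^ k i) ^ ∏ j, m j := by
          rw [← Finset.prod_pow]
          refine Finset.prod_congr rfl fun i _ => ?_
          rw [← hac i, ← hM i, ← zpow_natCast, ← zpow_natCast, ← zpow_mul, ← zpow_mul]
          push_cast; ring_nf
      _ = 1 := by rw [hk, one_pow]
  funext i
  have := congrFun hcoef i
  simp only [Pi.zero_apply, mul_eq_zero, Nat.cast_eq_zero, Finset.prod_eq_zero_iff] at this
  exact this.resolve_right fun ⟨j, _, hj⟩ => hm j hj

theorem dvd_of_prod_zpow_mem_closure (ha : MulIndependent a) (hac : ∀ i, a i ^ m i = c i)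
    {z : ι → ℤ} (hz : ∏ i, a i ^ z i ∈ Subgroup.closure (Set.range c)) (i : ι) :
    (m i : ℤ) ∣ z i := by
  obtain ⟨l, hl⟩ := Subgroup.mem_closure_range_iff_of_fintype.1 hz
  have := ha (fun i => z i - m i * l i) <| by
    simp only [zpow_sub, zpow_mul, zpow_natCast, hac, ← div_eq_mul_inv, Finset.prod_div_distrib,
      hl, div_self']
  exact ⟨l i, sub_eq_zero.1 (congrFun this i)⟩

end MulIndependent

theorem exists_ofAdd_intCast_eq {ι : Type*} {m : ι → ℕ}
    (k : Multiplicative (∀ i, ZMod (m i))) :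
    ∃ z : ι → ℤ, Multiplicative.ofAdd (fun i => (z i : ZMod (m i))) = k :=
  ⟨fun i => (k.toAdd i).cast, funext fun i => ZMod.intCast_zmod_cast (k.toAdd i)⟩

section PiZModLift

variable {G ι : Type*} [CommGroup G] [Fintype ι] {H : Subgroup G} {b : ι → G} {m : ι → ℕ}

noncomputable def piZModLift (hb : ∀ i, b i ^ m i ∈ H) :
    Multiplicative (∀ i, ZMod (m i)) →* G ⧸ H :=
  AddMonoidHom.toMultiplicativeLeft <| ∑ i, (ZMod.lift (m i)
    ⟨zmultiplesHom _ (Additive.ofMul (b i : G ⧸ H)), by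
      simp [← ofMul_pow, ← QuotientGroup.mk_pow, QuotientGroup.eq_one_iff, hb i]⟩).comp
    (Pi.evalAddMonoidHom _ i)

variable (hb : ∀ i, b i ^ m i ∈ H)

theorem piZModLift_ofAdd_intCast (z : ι → ℤ) :
    piZModLift hb (Multiplicative.ofAdd fun i => (z i : ZMod (m i))) =
      ((∏ i, b i ^ z i : G) : G ⧸ H) := by
  simp [piZModLift, QuotientGroup.mk_prod]

theorem piZModLift_ofAdd_single [DecidableEq ι] (i : ι) :
    piZModLift hb (Multiplicative.ofAdd (Pi.single i 1)) = b i := by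
  simp only [piZModLift, AddMonoidHom.toMultiplicativeLeft_apply_apply, toAdd_ofAdd,
    AddMonoidHom.finsetSum_apply, AddMonoidHom.coe_comp, Function.comp_apply,
    Pi.evalAddMonoidHom_apply, toMul_sum]
  rw [Finset.prod_eq_single i (fun j _ hj => by simp [Pi.single_eq_of_ne hj]) (by simp),
    Pi.single_eq_same, ← Int.cast_one, ZMod.lift_coe]
  simp

theorem piZModLift_injective (hdvd : ∀ z : ι → ℤ, ∏ i, b i ^ z i ∈ H → ∀ i, (m i : ℤ) ∣ z i) :
    Function.Injective (piZModLift hb) := by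
  refine (injective_iff_map_eq_one _).2 fun k hk => ?_
  obtain ⟨z, rfl⟩ := exists_ofAdd_intCast_eq k
  rw [piZModLift_ofAdd_intCast, QuotientGroup.eq_one_iff] at hk
  exact funext fun i => (ZMod.intCast_zmod_eq_zero_iff_dvd _ _).2 (hdvd z hk i)

theorem range_piZModLift :
    (piZModLift hb).range = (Subgroup.closure (Set.range b)).map (QuotientGroup.mk' H) := by
  ext q
  simp only [MonoidHom.mem_range, Subgroup.mem_map, Subgroup.mem_closure_range_iff_of_fintype]
  constructor
  · rintro ⟨k, rfl⟩
    obtain ⟨z, rfl⟩ := exists_ofAdd_intCast_eq k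
    exact ⟨_, ⟨z, rfl⟩, (piZModLift_ofAdd_intCast hb z).symm⟩
  · rintro ⟨_, ⟨z, rfl⟩, rfl⟩
    exact ⟨_, piZModLift_ofAdd_intCast hb z⟩

noncomputable def torsionPiZModLift (hm : ∀ i, m i ≠ 0) :
    Multiplicative (∀ i, ZMod (m i)) →* CommGroup.torsion (G ⧸ H) :=
  (piZModLift hb).codRestrict _ fun k =>
    have : ∀ i, NeZero (m i) := fun i => ⟨hm i⟩
    (piZModLift hb).isOfFinOrder (isOfFinOrder_of_finite k)

theorem torsionPiZModLift_injective (hm : ∀ i, m i ≠ 0)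
    (hdvd : ∀ z : ι → ℤ, ∏ i, b i ^ z i ∈ H → ∀ i, (m i : ℤ) ∣ z i) :
    Function.Injective (torsionPiZModLift hb hm) :=
  fun _ _ h => piZModLift_injective hb hdvd (congrArg Subtype.val h)

theorem torsionPiZModLift_surjective_iff (hm : ∀ i, m i ≠ 0) :
    Function.Surjective (torsionPiZModLift hb hm) ↔
      CommGroup.torsion (G ⧸ H) ≤ (Subgroup.closure (Set.range b)).map (QuotientGroup.mk' H) := by
  rw [← range_piZModLift hb]
  exact ⟨fun h q hq => by obtain ⟨k, hk⟩ := h ⟨q, hq⟩; exact ⟨k, congrArg Subtype.val hk⟩,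
    fun h ⟨q, hq⟩ => by obtain ⟨k, hk⟩ := h hq; exact ⟨k, Subtype.ext hk⟩⟩

end PiZModLift

section Sign

variable {R : Type*} [CommRing R] [LinearOrder R] [IsStrictOrderedRing R] {S : Set Rˣ}

theorem mem_closure_of_pos_of_mem_closure_neg_one_union {g : Rˣ} (hS : ∀ s ∈ S, (0 : R) < s)
    (hg : g ∈ Subgroup.closure ({-1} ∪ S)) (hg0 : (0 : R) < g) : g ∈ Subgroup.closure S := by
  rw [Subgroup.closure_union, ← Subgroup.zpowers_eq_closure, Subgroup.mem_sup] at hg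
  obtain ⟨_, ⟨s, rfl⟩, y, hy, rfl⟩ := hg
  have hy0 : (0 : R) < y := (Subgroup.closure_le (Units.posSubgroup R)).2 hS hy
  rcases Int.even_or_odd s with hs | hs
  · simpa [hs.neg_one_zpow] using hy
  · simp only [hs.neg_one_zpow, neg_mul, one_mul, Units.val_neg] at hg0
    linarith

theorem exists_pos_mk_eq (q : Rˣ ⧸ Subgroup.closure ({-1} ∪ S)) :
    ∃ w : Rˣ, (0 : R) < w ∧ (w : Rˣ ⧸ Subgroup.closure ({-1} ∪ S)) = q := by
  obtain ⟨g, rfl⟩ := QuotientGroup.mk_surjective q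
  rcases g.ne_zero.lt_or_gt with hg | hg
  · refine ⟨-g, by simpa using hg, QuotientGroup.eq.2 ?_⟩
    rw [inv_neg, neg_mul, inv_mul_cancel]
    exact Subgroup.subset_closure (Set.mem_union_left S rfl)
  · exact ⟨g, hg, rfl⟩

end Sign

section Rat

variable {ι : Type*} [Fintype ι] {c : ι → ℚˣ}

theorem mulIndependent_hatRootU (hpos : ∀ i, (0 : ℚ) < c i) (hc : MulIndependent c) :
    MulIndependent fun i => hatRootU (c i) :=
  hc.of_pow_eq (fun i => (mRoot_pos (hpos i) (Units.val_eq_one.not.2 (hc.ne_one i))).ne')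
    fun i => hatRootU_pow_mRoot (hpos i) (hc.ne_one i)

theorem closure_range_hatRootU_le_posSubgroup (hpos : ∀ i, (0 : ℚ) < c i)
    (hc : MulIndependent c) :
    Subgroup.closure (Set.range fun i => hatRootU (c i)) ≤ Units.posSubgroup ℚ :=
  (Subgroup.closure_le _).2 <| Set.range_subset_iff.2 fun i =>
    hatRootU_pos (hpos i) (hc.ne_one i)

theorem closure_range_le_closure_range_hatRootU (hpos : ∀ i, (0 : ℚ) < c i)
    (hc : MulIndependent c) :
    Subgroup.closure (Set.range c) ≤ Subgroup.closure (Set.range fun i => hatRootU (c i)) :=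
  (Subgroup.closure_le _).2 <| Set.range_subset_iff.2 fun i =>
    hatRootU_pow_mRoot (hpos i) (hc.ne_one i) ▸
      pow_mem (Subgroup.subset_closure (Set.mem_range_self i)) _

theorem dvd_of_prod_hatRootU_zpow_mem (hpos : ∀ i, (0 : ℚ) < c i) (hc : MulIndependent c)
    {z : ι → ℤ} (hz : ∏ i, hatRootU (c i) ^ z i ∈ Subgroup.closure ({-1} ∪ Set.range c))
    (i : ι) :
    (mRoot (c i : ℚ) : ℤ) ∣ z i :=
  (mulIndependent_hatRootU hpos hc).dvd_of_prod_zpow_mem_closure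
    (fun i => hatRootU_pow_mRoot (hpos i) (hc.ne_one i))
    (mem_closure_of_pos_of_mem_closure_neg_one_union (by simpa using hpos) hz
      (closure_range_hatRootU_le_posSubgroup hpos hc
        (prod_mem fun i _ => zpow_mem (Subgroup.subset_closure (Set.mem_range_self i)) _))) i

theorem torsion_le_map_closure_range_hatRootU_iff (hpos : ∀ i, (0 : ℚ) < c i)
    (hc : MulIndependent c) :
    CommGroup.torsion (ℚˣ ⧸ Subgroup.closure ({-1} ∪ Set.range c)) ≤
        (Subgroup.closure (Set.range fun i => hatRootU (c i))).map (QuotientGroup.mk' _) ↔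
      ∀ (l : ι → ℤ) (x : ℚˣ), (0 : ℚ) < x → x ≠ 1 → ∏ i, c i ^ l i = x →
        ∃ l' : ι → ℤ, hatRootU x = ∏ i, hatRootU (c i) ^ l' i := by
  have hS : ∀ s ∈ Set.range c, (0 : ℚ) < s := by simpa using hpos
  constructor
  · rintro h l x hx hx1 rfl
    rw [← Subgroup.mem_closure_range_iff_of_fintype]
    have htor : IsOfFinOrder (hatRootU (∏ i, c i ^ l i) :
        ℚˣ ⧸ Subgroup.closure ({-1} ∪ Set.range c)) := by
      refine isOfFinOrder_iff_pow_eq_one.2 ⟨_, mRoot_pos hx (Units.val_eq_one.not.2 hx1), ?_⟩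
      rw [← QuotientGroup.mk_pow, hatRootU_pow_mRoot hx hx1, QuotientGroup.eq_one_iff]
      exact prod_mem fun i _ =>
        zpow_mem (Subgroup.subset_closure (Set.mem_union_right _ (Set.mem_range_self i))) _
    obtain ⟨y, hyB, hy⟩ := h htor
    rw [QuotientGroup.mk'_apply, QuotientGroup.eq] at hy
    have hy0 : (0 : ℚ) < y := closure_range_hatRootU_le_posSubgroup hpos hc hyB
    have hquot := mem_closure_of_pos_of_mem_closure_neg_one_union hS hy
      (by simpa using mul_pos (inv_pos.2 hy0) (hatRootU_pos hx hx1))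
    simpa using mul_mem hyB (closure_range_le_closure_range_hatRootU hpos hc hquot)
  · intro h q hq
    obtain ⟨w, hw, rfl⟩ := exists_pos_mk_eq q
    obtain ⟨n, hn, hwn⟩ := isOfFinOrder_iff_pow_eq_one.1 hq
    rw [← QuotientGroup.mk_pow, QuotientGroup.eq_one_iff] at hwn
    have hwn0 : (0 : ℚ) < (w ^ n : ℚˣ) := by rw [Units.val_pow_eq_pow_val]; exact pow_pos hw n
    have hwnC : w ^ n ∈ Subgroup.closure (Set.range c) :=
      mem_closure_of_pos_of_mem_closure_neg_one_union hS hwn hwn0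
    obtain ⟨l, hl⟩ := Subgroup.mem_closure_range_iff_of_fintype.1 hwnC
    refine ⟨w, ?_, rfl⟩
    by_cases hw1 : w ^ n = 1
    · have : (w : ℚ) = 1 :=
        (pow_eq_one_iff_of_nonneg hw.le hn.ne').1 (by simpa using congrArg Units.val hw1)
      rw [Units.val_eq_one.1 this]
      exact one_mem _
    · obtain ⟨l', hl'⟩ := h l (w ^ n) hwn0 hw1 hl.symm
      rw [eq_hatRootU_pow hw1 hw rfl, hl']
      exact pow_mem (Subgroup.mem_closure_range_iff_of_fintype.2 ⟨l', rfl⟩) _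

end Rat

theorem stmt6 (ν : ℕ) (c : Fin ν → ℚˣ) (hpos : ∀ h, (0 : ℚ) < c h)
    (hindep : ∀ l : Fin ν → ℤ, ∏ h, c h ^ l h = 1 → l = 0) :
    (∀ (l : Fin ν → ℤ) (x : ℚˣ), (0 : ℚ) < x → x ≠ 1 → ∏ h, c h ^ l h = x →
        ∃ l' : Fin ν → ℤ, hatRootU x = ∏ h, hatRootU (c h) ^ l' h) ↔
      (∃ e : CommGroup.torsion (ℚˣ ⧸ Subgroup.closure ({-1} ∪ Set.range c)) ≃*
          Multiplicative (∀ h : Fin ν, ZMod (mRoot (c h : ℚ))),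
        ∀ h : Fin ν,
          ((e.symm (Multiplicative.ofAdd
              (Pi.single h (1 : ZMod (mRoot (c h : ℚ))))) :
            CommGroup.torsion (ℚˣ ⧸ Subgroup.closure ({-1} ∪ Set.range c))) :
              ℚˣ ⧸ Subgroup.closure ({-1} ∪ Set.range c)) =
            QuotientGroup.mk (hatRootU (c h))) := by
  have hne := MulIndependent.ne_one hindep
  have hb (h : Fin ν) : hatRootU (c h) ^ mRoot (c h : ℚ) ∈
      Subgroup.closure ({-1} ∪ Set.range c) := by
    rw [hatRootU_pow_mRoot (hpos h) (hne h)]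
    exact Subgroup.subset_closure (Set.mem_union_right _ (Set.mem_range_self h))
  have hm (h : Fin ν) : mRoot (c h : ℚ) ≠ 0 :=
    (mRoot_pos (hpos h) (Units.val_eq_one.not.2 (hne h))).ne'
  have hinj := torsionPiZModLift_injective hb hm fun _ => dvd_of_prod_hatRootU_zpow_mem hpos hindep
  rw [← torsion_le_map_closure_range_hatRootU_iff hpos hindep,
    ← torsionPiZModLift_surjective_iff hb hm]
  constructor
  · intro hsurj
    refine ⟨(MulEquiv.ofBijective _ ⟨hinj, hsurj⟩).symm, fun h => ?_⟩
    rw [MulEquiv.symm_symm]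
    exact piZModLift_ofAdd_single hb h
  · rintro ⟨e, -⟩
    have (h : Fin ν) : NeZero (mRoot (c h : ℚ)) := ⟨hm h⟩
    exact hinj.surjective_of_finite e.symm.toEquiv
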